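/- arXiv:2103.16519 — 2 statements merged into one kernel-verified Lean document; each statement's English description precedes it below -/
import Mathlib

section
/- HFSUUB is a downward-closed (anti-monotone) upper bound: if FS' is a prefix of FS or FS' = FS, then fu(FS) ≤ HFSUUB(FS'), where fu(FS) is the total fuzzy utility of FS in database D and HFSUUB(FS') = Σ_{QS ∈ D, FS' ⊑ QS} MFSU(QS). -/
/-- HFSUUB is downward closed: `D` is a finite multiset of q-sequences,
`containsFS QS` (resp. `containsFS' QS`) means `FS ⊑ QS` (resp. `FS' ⊑ QS`),
`fuQ QS = fu(FS, QS)` and `MFSU QS` the maximum fuzzy sequence utility.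
Given that (a) every q-sequence containing `FS` contains its prefix `FS'`,
(b) `fu(FS,QS) ≤ MFSU(QS)` for all `QS` containing `FS`, and (c) `MFSU ≥ 0`,
we get `fu(FS) ≤ HFSUUB(FS') = Σ_{QS ∈ D, FS' ⊑ QS} MFSU(QS)`. -/
theorem fu_le_HFSUUB {Q : Type*} (D : Multiset Q)
    (containsFS containsFS' : Q → Prop)
    [DecidablePred containsFS] [DecidablePred containsFS']
    (fuQ MFSU : Q → ℝ)
    (ha : ∀ QS, containsFS QS → containsFS' QS)
    (hb : ∀ QS, containsFS QS → fuQ QS ≤ MFSU QS)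
    (hc : ∀ QS ∈ D, 0 ≤ MFSU QS) :
    ((D.filter containsFS).map fuQ).sum ≤ ((D.filter containsFS').map MFSU).sum := by
  have h1 : ((D.filter containsFS).map fuQ).sum ≤ ((D.filter containsFS).map MFSU).sum := by
    apply Multiset.sum_map_le_sum_map
    intro x hx
    exact hb x (Multiset.of_mem_filter hx)
  refine h1.trans ?_
  have hsub : D.filter containsFS ≤ D.filter containsFS' :=
    Multiset.monotone_filter_right D ha
  obtain ⟨u, hu⟩ := Multiset.le_iff_exists_add.mp hsub
  rw [hu, Multiset.map_add, Multiset.sum_add]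
  have : 0 ≤ (u.map MFSU).sum := by
    apply Multiset.sum_nonneg
    intro x hx
    obtain ⟨y, hy, rfl⟩ := Multiset.mem_map.mp hx
    exact hc y (Multiset.mem_of_le (Multiset.filter_le _ _) (hu ▸ Multiset.mem_add.mpr (Or.inr hy)))
  linarith
end

section
/- SDFU is a tighter bound than HFSUUB for descendants: for any f-sequence FS' and q-sequence QS containing FS', SDFU(FS', QS) ≤ MFSU(QS), and hence SDFU(FS') ≤ HFSUUB(FS'). -/
/-- SDFU is tighter than HFSUUB. For each q-sequence `s ∈ D` containing `FS'`:
`Occ s` is the set of q-item occurrences with nonnegative `MFUI`; for each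
extension position `p ∈ EP s`, the matched occurrences `matched s p` and the
occurrences `after s p` strictly after `p` are disjoint subsets of `Occ s`;
`fuP s p` (the instance fuzzy utility at `p`) is bounded by the sum of `MFUI`
over matched occurrences; `MRFU s p` sums `MFUI` over occurrences after `p`;
`SDFUp s p = fuP + MRFU` (or `0` when `MRFU ≤ 0`); `SDFU s` is the max over
extension positions and `MFSU s` sums `MFUI` over all occurrences. Then
`SDFU(FS', QS) ≤ MFSU(QS)` for every `QS` containing `FS'`, and hence
`SDFU(FS') ≤ HFSUUB(FS')` (sums over q-sequences of `D` containing `FS'`). -/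
theorem SDFU_le_HFSUUB {Q ι π : Type*} [DecidableEq ι]
    (D : Multiset Q) (contains : Q → Prop) [DecidablePred contains]
    (Occ : Q → Finset ι) (MFUI : Q → ι → ℝ)
    (hM : ∀ s, ∀ o ∈ Occ s, 0 ≤ MFUI s o)
    (EP : Q → Finset π) (hEP : ∀ s, contains s → (EP s).Nonempty)
    (matched after : Q → π → Finset ι)
    (hmsub : ∀ s p, matched s p ⊆ Occ s) (hasub : ∀ s p, after s p ⊆ Occ s)
    (hdisj : ∀ s p, Disjoint (matched s p) (after s p))
    (fuP MRFU SDFUp : Q → π → ℝ)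
    (hfu : ∀ s, ∀ p ∈ EP s, fuP s p ≤ ∑ o ∈ matched s p, MFUI s o)
    (hMR : ∀ s p, MRFU s p = ∑ o ∈ after s p, MFUI s o)
    (hSD : ∀ s p, SDFUp s p = if 0 < MRFU s p then fuP s p + MRFU s p else 0)
    (SDFU MFSU : Q → ℝ)
    (hSDFU : ∀ s, ∀ h : contains s, SDFU s = (EP s).sup' (hEP s h) (SDFUp s))
    (hMFSU : ∀ s, MFSU s = ∑ o ∈ Occ s, MFUI s o) :
    (∀ s ∈ D.filter contains, SDFU s ≤ MFSU s) ∧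
      ((D.filter contains).map SDFU).sum ≤ ((D.filter contains).map MFSU).sum := by
  have key : ∀ s ∈ D.filter contains, SDFU s ≤ MFSU s := by
    intro s hs
    have hc : contains s := (Multiset.mem_filter.mp hs).2
    rw [hSDFU s hc, hMFSU s]
    apply Finset.sup'_le
    intro p hp
    rw [hSD s p]
    split
    · calc fuP s p + MRFU s p
          ≤ (∑ o ∈ matched s p, MFUI s o) + ∑ o ∈ after s p, MFUI s o := by
            rw [hMR]; exact add_le_add_left (hfu s p hp) _
        _ = ∑ o ∈ matched s p ∪ after s p, MFUI s o :=
            (Finset.sum_union (hdisj s p)).symm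
        _ ≤ ∑ o ∈ Occ s, MFUI s o := Finset.sum_le_sum_of_subset_of_nonneg
            (Finset.union_subset (hmsub s p) (hasub s p))
            (fun o ho _ => hM s o ho)
    · exact Finset.sum_nonneg (fun o ho => hM s o ho)
  refine ⟨key, Multiset.sum_map_le_sum_map _ _ key⟩
end
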